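/- arXiv:2104.06433 — 2 statements merged into one kernel-verified Lean document; each statement's English description precedes it below -/
import Mathlib

section
/- Let u, v: ℝ₊ → ℝ₊ be strictly increasing, twice continuously differentiable with u''(x)/u'(x) ≤ v''(x)/v'(x) for all x ≥ 0. Then for every nonnegative random variable X (with the relevant integrability), u⁻¹(E[u(X)]) ≤ v⁻¹(E[v(X)]) (Arrow–Pratt comparison of certainty equivalents). -/
/-!
Let `c = v⁻¹(E[v(X)])`. The hypothesis `u''/u' ≤ v''/v'` says that `u'/v'` is antitone, so with
`k = u'(c)/v'(c)` the function `k v - u` decreases up to `c` and increases after it. Hence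
`u(x) - u(c) ≤ k (v(x) - v(c))` for all `x ≥ 0`; taking expectations gives `E[u(X)] ≤ u(c)`,
that is `u⁻¹(E[u(X)]) ≤ c`.
-/

open Set Filter MeasureTheory

noncomputable section

theorem exists_mem_eq_integral_comp {α Ω : Type*} [TopologicalSpace α] [MeasurableSpace Ω]
    {μ : Measure Ω} [IsProbabilityMeasure μ] {s : Set α} (hs : IsPreconnected s)
    {w : α → ℝ} (hw : ContinuousOn w s) {X : Ω → α} (hX : ∀ ω, X ω ∈ s)
    (hwX : Integrable (fun ω => w (X ω)) μ) :
    ∃ c ∈ s, w c = ∫ ω, w (X ω) ∂μ := by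
  obtain ⟨ω₁, h₁⟩ := exists_le_integral hwX
  obtain ⟨ω₂, h₂⟩ := exists_integral_le hwX
  exact hs.intermediate_value (hX ω₁) (hX ω₂) hw ⟨h₁, h₂⟩

theorem integral_le_of_sub_le_mul_sub {Ω : Type*} [MeasurableSpace Ω] {μ : Measure Ω}
    [IsProbabilityMeasure μ] {f g : Ω → ℝ} {a b k : ℝ} (hf : Integrable f μ)
    (hg : Integrable g μ) (hfg : ∀ ω, f ω - a ≤ k * (g ω - b)) (hgb : ∫ ω, g ω ∂μ = b) :
    ∫ ω, f ω ∂μ ≤ a := by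
  have hint : Integrable (fun ω => k * (g ω - b)) μ :=
    (hg.sub (integrable_const b)).const_mul k
  calc ∫ ω, f ω ∂μ ≤ ∫ ω, (a + k * (g ω - b)) ∂μ :=
        integral_mono hf ((integrable_const a).add hint) fun ω => by linarith [hfg ω]
    _ = a := by
        rw [integral_add (integrable_const a) hint, integral_const_mul,
          integral_sub hg (integrable_const b), hgb]
        simp

section Calculus

variable {s : Set ℝ}

theorem isMinOn_of_hasDerivAt_nonpos_of_nonneg (hs : Convex ℝ s) {φ φ' : ℝ → ℝ} {c : ℝ}
    (hc : c ∈ s) (hφ : ∀ x ∈ s, HasDerivAt φ (φ' x) x)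
    (hleft : ∀ x ∈ s, x ≤ c → φ' x ≤ 0) (hright : ∀ x ∈ s, c ≤ x → 0 ≤ φ' x) :
    IsMinOn φ s c := by
  have hcont : ContinuousOn φ s := fun x hx => (hφ x hx).continuousAt.continuousWithinAt
  refine isMinOn_iff.2 fun x hx => ?_
  rcases le_total c x with hcx | hxc
  · have hsub : Icc c x ⊆ s := hs.ordConnected.out hc hx
    refine monotoneOn_of_hasDerivWithinAt_nonneg (f' := φ') (convex_Icc c x) (hcont.mono hsub)
      (fun y hy => ?_) (fun y hy => ?_) (left_mem_Icc.2 hcx) (right_mem_Icc.2 hcx) hcx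
    all_goals rw [interior_Icc] at hy
    · exact (hφ y (hsub (Ioo_subset_Icc_self hy))).hasDerivWithinAt
    · exact hright y (hsub (Ioo_subset_Icc_self hy)) hy.1.le
  · have hsub : Icc x c ⊆ s := hs.ordConnected.out hx hc
    refine antitoneOn_of_hasDerivWithinAt_nonpos (f' := φ') (convex_Icc x c) (hcont.mono hsub)
      (fun y hy => ?_) (fun y hy => ?_) (left_mem_Icc.2 hxc) (right_mem_Icc.2 hxc) hxc
    all_goals rw [interior_Icc] at hy
    · exact (hφ y (hsub (Ioo_subset_Icc_self hy))).hasDerivWithinAt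
    · exact hleft y (hsub (Ioo_subset_Icc_self hy)) hy.2.le

theorem antitoneOn_div_of_logDeriv_le (hs : Convex ℝ s) {f g f' g' : ℝ → ℝ}
    (hf : ∀ x ∈ s, HasDerivAt f (f' x) x) (hg : ∀ x ∈ s, HasDerivAt g (g' x) x)
    (hf0 : ∀ x ∈ s, 0 < f x) (hg0 : ∀ x ∈ s, 0 < g x)
    (hle : ∀ x ∈ s, f' x / f x ≤ g' x / g x) :
    AntitoneOn (fun x => f x / g x) s := by
  have hdiv : ∀ x ∈ s,
      HasDerivAt (fun x => f x / g x) ((f' x * g x - f x * g' x) / g x ^ 2) x :=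
    fun x hx => (hf x hx).div (hg x hx) (hg0 x hx).ne'
  refine antitoneOn_of_hasDerivWithinAt_nonpos hs
    (fun x hx => (hdiv x hx).continuousAt.continuousWithinAt)
    (fun x hx => (hdiv x (interior_subset hx)).hasDerivWithinAt) fun x hx => ?_
  have hx := interior_subset hx
  have := (div_le_div_iff₀ (hf0 x hx) (hg0 x hx)).1 (hle x hx)
  exact div_nonpos_of_nonpos_of_nonneg (by linarith) (sq_nonneg _)

theorem sub_le_div_mul_sub_of_antitoneOn_div (hs : Convex ℝ s) {u v u' v' : ℝ → ℝ}
    (hu : ∀ x ∈ s, HasDerivAt u (u' x) x) (hv : ∀ x ∈ s, HasDerivAt v (v' x) x)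
    (hv' : ∀ x ∈ s, 0 < v' x) (hanti : AntitoneOn (fun x => u' x / v' x) s)
    {c x : ℝ} (hc : c ∈ s) (hx : x ∈ s) :
    u x - u c ≤ u' c / v' c * (v x - v c) := by
  set k := u' c / v' c
  have hleft : ∀ y ∈ s, y ≤ c → k * v' y - u' y ≤ 0 := fun y hy hyc => by
    have := (le_div_iff₀ (hv' y hy)).1 (hanti hy hc hyc)
    linarith
  have hright : ∀ y ∈ s, c ≤ y → 0 ≤ k * v' y - u' y := fun y hy hcy => by
    have := (div_le_iff₀ (hv' y hy)).1 (hanti hc hy hcy)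
    linarith
  have hmin : IsMinOn (fun y => k * v y - u y) s c :=
    isMinOn_of_hasDerivAt_nonpos_of_nonneg hs hc
      (fun y hy => ((hv y hy).const_mul k).sub (hu y hy)) hleft hright
  have := isMinOn_iff.1 hmin x hx
  linarith

end Calculus

theorem certainty_equivalent_le_general
    {Ω : Type*} [MeasurableSpace Ω] (μ : Measure Ω) [IsProbabilityMeasure μ]
    (u v u' v' u'' v'' : ℝ → ℝ)
    (hum : StrictMonoOn u (Ici 0)) (hvm : StrictMonoOn v (Ici 0))
    (hud : ∀ x ∈ Ici (0 : ℝ), HasDerivAt u (u' x) x)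
    (hud2 : ∀ x ∈ Ici (0 : ℝ), HasDerivAt u' (u'' x) x)
    (hvd : ∀ x ∈ Ici (0 : ℝ), HasDerivAt v (v' x) x)
    (hvd2 : ∀ x ∈ Ici (0 : ℝ), HasDerivAt v' (v'' x) x)
    (hu' : ∀ x ∈ Ici (0 : ℝ), 0 < u' x) (hv' : ∀ x ∈ Ici (0 : ℝ), 0 < v' x)
    (hratio : ∀ x ∈ Ici (0 : ℝ), u'' x / u' x ≤ v'' x / v' x)
    (X : Ω → ℝ) (hXpos : ∀ ω, 0 ≤ X ω)
    (huX : Integrable (fun ω => u (X ω)) μ)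
    (hvX : Integrable (fun ω => v (X ω)) μ) :
    Function.invFunOn u (Ici 0) (∫ ω, u (X ω) ∂μ) ≤
      Function.invFunOn v (Ici 0) (∫ ω, v (X ω) ∂μ) := by
  obtain ⟨a, ha, hua⟩ := exists_mem_eq_integral_comp isPreconnected_Ici
    (fun x hx => (hud x hx).continuousAt.continuousWithinAt) hXpos huX
  obtain ⟨c, hc, hvc⟩ := exists_mem_eq_integral_comp isPreconnected_Ici
    (fun x hx => (hvd x hx).continuousAt.continuousWithinAt) hXpos hvX
  have hanti := antitoneOn_div_of_logDeriv_le (convex_Ici 0) hud2 hvd2 hu' hv' hratio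
  have hmean : u a ≤ u c := hua ▸ integral_le_of_sub_le_mul_sub huX hvX
    (fun ω => sub_le_div_mul_sub_of_antitoneOn_div (convex_Ici 0) hud hvd hv' hanti hc
      (hXpos ω)) hvc.symm
  rw [← hua, ← hvc, hum.injOn.leftInvOn_invFunOn ha, hvm.injOn.leftInvOn_invFunOn hc]
  exact (hum.le_iff_le ha hc).1 hmean

/-- Arrow–Pratt comparison of certainty equivalents:
if `u''/u' ≤ v''/v'` on `ℝ₊`, then `u⁻¹(E[u(X)]) ≤ v⁻¹(E[v(X)])` for every nonnegative
random variable `X`. -/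
theorem certainty_equivalent_le
    {Ω : Type*} [MeasurableSpace Ω] (μ : Measure Ω) [IsProbabilityMeasure μ]
    (u v u' v' u'' v'' : ℝ → ℝ)
    (hu0 : MapsTo u (Ici 0) (Ici 0)) (hv0 : MapsTo v (Ici 0) (Ici 0))
    (hum : StrictMonoOn u (Ici 0)) (hvm : StrictMonoOn v (Ici 0))
    (hud : ∀ x ∈ Ici (0 : ℝ), HasDerivAt u (u' x) x)
    (hud2 : ∀ x ∈ Ici (0 : ℝ), HasDerivAt u' (u'' x) x)
    (hvd : ∀ x ∈ Ici (0 : ℝ), HasDerivAt v (v' x) x)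
    (hvd2 : ∀ x ∈ Ici (0 : ℝ), HasDerivAt v' (v'' x) x)
    (hu''c : ContinuousOn u'' (Ici 0)) (hv''c : ContinuousOn v'' (Ici 0))
    (hu' : ∀ x ∈ Ici (0 : ℝ), 0 < u' x) (hv' : ∀ x ∈ Ici (0 : ℝ), 0 < v' x)
    (hratio : ∀ x ∈ Ici (0 : ℝ), u'' x / u' x ≤ v'' x / v' x)
    (X : Ω → ℝ) (hX : Measurable X) (hXpos : ∀ ω, 0 ≤ X ω)
    (huX : Integrable (fun ω => u (X ω)) μ)
    (hvX : Integrable (fun ω => v (X ω)) μ) :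
    Function.invFunOn u (Ici 0) (∫ ω, u (X ω) ∂μ) ≤
      Function.invFunOn v (Ici 0) (∫ ω, v (X ω) ∂μ) :=
  certainty_equivalent_le_general μ u v u' v' u'' v'' hum hvm hud hud2 hvd hvd2 hu' hv' hratio X
    hXpos huX hvX

end
end

section
/- For φ(x) = (bx−1)e^{bx}+1, Φ(x) = φ(|x|), and any c ≥ 0, choosing r := max(r₀, 2bc) (with r₀ from the Gaussian tail bound) gives ℙ(|W_t| ≥ r)·Φ(c/t) ≤ t·e^{(2bc−r)/t} → 0 as t ↓ 0; i.e., the Brownian motion together with Φ satisfies the tightness condition lim_{t↓0} ℙ(|W_t| ≥ r)Φ(c/t) = 0. -/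
open MeasureTheory Set Filter Real

noncomputable section

def gaussDensity (d : ℕ) (t : ℝ) (y : EuclideanSpace ℝ (Fin d)) : ℝ :=
  (2 * π * t) ^ (-(d : ℝ) / 2) * Real.exp (-‖y‖ ^ 2 / (2 * t))

/-- `ℙ(|W_t| ≥ r)` for a `d`-dimensional Brownian motion. -/
def gaussTail (d : ℕ) (t r : ℝ) : ℝ :=
  ∫ x in (Metric.closedBall (0 : EuclideanSpace ℝ (Fin d)) r)ᶜ, gaussDensity d t x

lemma gaussTail_nonneg (d : ℕ) (t r : ℝ) (ht : 0 < t) : 0 ≤ gaussTail d t r := by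
  apply setIntegral_nonneg measurableSet_closedBall.compl
  intro x _
  unfold gaussDensity
  have hbase : (0:ℝ) ≤ 2 * π * t := by positivity
  exact mul_nonneg (Real.rpow_nonneg hbase _) (Real.exp_pos _).le

/-- `Φ(x) = (bx-1)e^{bx}+1 ≥ 0` for `bx = u ≥ 0` (in fact for all `u`). -/
lemma phi_nonneg (u : ℝ) : 0 ≤ (u - 1) * Real.exp u + 1 := by
  have h1 : -u + 1 ≤ Real.exp (-u) := Real.add_one_le_exp (-u)
  have h2 : Real.exp (-u) * Real.exp u = 1 := by
    rw [← Real.exp_add]; simp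
  nlinarith [Real.exp_pos u, mul_le_mul_of_nonneg_right h1 (Real.exp_pos u).le]

lemma phi_le_exp_two (u : ℝ) (hu : 0 ≤ u) :
    (u - 1) * Real.exp u + 1 ≤ Real.exp (2 * u) := by
  have h1 : u + 1 ≤ Real.exp u := by linarith [Real.add_one_le_exp u]
  have h2 : 1 ≤ Real.exp u := Real.one_le_exp hu
  have h3 : Real.exp (2 * u) = Real.exp u * Real.exp u := by
    rw [two_mul, Real.exp_add]
  nlinarith [Real.exp_pos u]

/-- With `Φ(x) = (b|x| − 1)e^{b|x|} + 1` and `r = max(r₀, 2bc)`, the Gaussian tail bound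
gives `ℙ(|W_t| ≥ r)·Φ(c/t) ≤ t·e^{(2bc − r)/t} → 0` as `t ↓ 0`. -/
theorem tightness_condition (d : ℕ) (b c t₀ r₀ : ℝ)
    (hb : 0 < b) (hc : 0 ≤ c) (ht₀ : 0 < t₀) (hr₀ : 0 ≤ r₀)
    (htail : ∀ t : ℝ, 0 < t → t ≤ t₀ → ∀ r : ℝ, r₀ ≤ r →
      gaussTail d t r ≤ t * Real.exp (-r / t)) :
    (∀ t : ℝ, 0 < t → t ≤ t₀ →
        gaussTail d t (max r₀ (2 * b * c)) *
            ((b * |c / t| - 1) * Real.exp (b * |c / t|) + 1) ≤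
          t * Real.exp ((2 * b * c - max r₀ (2 * b * c)) / t)) ∧
      Tendsto (fun t : ℝ =>
          gaussTail d t (max r₀ (2 * b * c)) *
            ((b * |c / t| - 1) * Real.exp (b * |c / t|) + 1))
        (nhdsWithin 0 (Ioi 0)) (nhds 0) := by
  set r := max r₀ (2 * b * c) with hrdef
  have hrr : r₀ ≤ r := le_max_left _ _
  have hbc : 2 * b * c ≤ r := le_max_right _ _
  have hmain : ∀ t : ℝ, 0 < t → t ≤ t₀ →
      gaussTail d t r * ((b * |c / t| - 1) * Real.exp (b * |c / t|) + 1) ≤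
        t * Real.exp ((2 * b * c - r) / t) := by
    intro t ht htle
    have habs : |c / t| = c / t := abs_of_nonneg (div_nonneg hc ht.le)
    have hu : 0 ≤ b * (c / t) := mul_nonneg hb.le (div_nonneg hc ht.le)
    have hΦle : (b * |c / t| - 1) * Real.exp (b * |c / t|) + 1 ≤
        Real.exp (2 * b * c / t) := by
      rw [habs]
      have := phi_le_exp_two (b * (c / t)) hu
      have heq : 2 * (b * (c / t)) = 2 * b * c / t := by ring
      rw [heq] at this
      exact this
    calc gaussTail d t r * ((b * |c / t| - 1) * Real.exp (b * |c / t|) + 1)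
        ≤ gaussTail d t r * Real.exp (2 * b * c / t) :=
          mul_le_mul_of_nonneg_left hΦle (gaussTail_nonneg d t r ht)
      _ ≤ (t * Real.exp (-r / t)) * Real.exp (2 * b * c / t) :=
          mul_le_mul_of_nonneg_right (htail t ht htle r hrr) (Real.exp_pos _).le
      _ = t * Real.exp ((2 * b * c - r) / t) := by
          rw [mul_assoc, ← Real.exp_add]
          congr 1
          ring
  refine ⟨hmain, ?_⟩
  have hmem : Ioc (0:ℝ) t₀ ∈ nhdsWithin (0:ℝ) (Ioi 0) :=
    Ioc_mem_nhdsGT_of_mem (by constructor <;> simp [ht₀, le_refl])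
  have hg0 : Tendsto (fun t : ℝ => t * Real.exp ((2 * b * c - r) / t))
      (nhdsWithin 0 (Ioi 0)) (nhds 0) := by
    apply squeeze_zero' (f := fun t : ℝ => t * Real.exp ((2 * b * c - r) / t))
      (g := fun t : ℝ => t)
    · filter_upwards [self_mem_nhdsWithin] with t ht
      exact mul_nonneg (le_of_lt ht) (Real.exp_pos _).le
    · filter_upwards [self_mem_nhdsWithin] with t ht
      have hexp : Real.exp ((2 * b * c - r) / t) ≤ 1 := by
        rw [Real.exp_le_one_iff]
        exact div_nonpos_of_nonpos_of_nonneg (by linarith) (le_of_lt ht)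
      calc t * Real.exp ((2 * b * c - r) / t) ≤ t * 1 :=
            mul_le_mul_of_nonneg_left hexp (le_of_lt ht)
        _ = t := mul_one t
    · exact tendsto_id.mono_left nhdsWithin_le_nhds
  apply squeeze_zero'
  · filter_upwards [self_mem_nhdsWithin] with t ht
    have habs : |c / t| = c / t := abs_of_nonneg (div_nonneg hc (le_of_lt ht))
    have := phi_nonneg (b * (c / t))
    rw [habs]
    exact mul_nonneg (gaussTail_nonneg d t r ht) (by rw [mul_comm b (c/t)] at this ⊢; linarith)
  · filter_upwards [hmem] with t ht
    exact hmain t ht.1 ht.2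
  · exact hg0

end
end
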